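/- Let G be a group, A an abelian normal subgroup of G, and T = t_1A ∪ ⋯ ∪ t_nA ∪ A a union of cosets where t_1, …, t_n ∈ G commute with each other. If, as endomorphisms of A (via conjugation), the t_i satisfy (t_i − 1)^c = 0 for all i = 1, …, n, and (t_i − 1)(t_it_j − 1)^{c−1} = 0 for all 1 ≤ i ≠ j ≤ n, then the subset T satisfies the Malcev law M_c(x,y). -/

import Mathlib

open Pointwise
open scoped IsMulCommutative

/-- Malcev word pair `(α_c, β_c)`. -/
def malcevPair {G : Type*} [Monoid G] (c : ℕ) (x y : G) : G × G :=
  Nat.rec (x, y) (fun _ p => (p.1 * p.2, p.2 * p.1)) c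

/-- The Malcev word `α_c(x,y)`. -/
def malcevAlpha {G : Type*} [Monoid G] (c : ℕ) (x y : G) : G := (malcevPair c x y).1

/-- The Malcev word `β_c(x,y)`. -/
def malcevBeta {G : Type*} [Monoid G] (c : ℕ) (x y : G) : G := (malcevPair c x y).2

/-- The evaluation of `f_c(X,Y) = (X-1)·∏_{i=0}^{c-2}(X^{2^i}Y^{2^i}-1)` at two
elements of a (possibly noncommutative) ring. -/
def fEval {R : Type*} [Ring R] (c : ℕ) (t u : R) : R :=
  (t - 1) * ((List.range (c - 1)).map fun i => t ^ 2 ^ i * u ^ 2 ^ i - 1).prod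

/-- The endomorphism of the abelian normal subgroup `A` (written additively)
induced by conjugation by `t`, i.e. `a ↦ a^t = t⁻¹ * a * t`. -/
def conjEnd {G : Type*} [Group G] (A : Subgroup G) [hN : A.Normal] [IsMulCommutative A]
    (t : G) : AddMonoid.End (Additive A) :=
  AddMonoidHom.mk'
    (fun a => Additive.ofMul (⟨t⁻¹ * ((Additive.toMul a : A) : G) * t, by
      simpa using hN.conj_mem _ (Additive.toMul a).2 t⁻¹⟩ : A))
    (fun a b => congrArg Additive.ofMul (Subtype.ext (by
      show t⁻¹ * ((Additive.toMul a * Additive.toMul b : A) : G) * t = _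
      simp only [toMul_ofMul, Subgroup.coe_mul]
      group)))

/-! Write `x = s u`, `y = s' v` with `s, s' ∈ {1, t₁, …, tₙ}` and `u, v ∈ A`. As `s` and `s'`
commute, `α₁` and `β₁` lie in the same coset `w A`, `w = s s'`, and their `A`-coordinates
differ by `d = (s' - 1) u - (s - 1) v`. If `α_k, β_k ∈ w^(2^(k-1)) A` have coordinates `p, q`,
then `α_{k+1}` and `β_{k+1}` have coordinates differing by `(w^(2^(k-1)) - 1) (p - q)`, and
`w^j - 1` is `w - 1` times a polynomial in `w`. So the power of `w - 1` annihilating the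
difference drops by one at each step. The hypotheses give
`(w - 1)^(c-1) (s - 1) = (w - 1)^(c-1) (s' - 1) = 0` (for `s = s'` via
`s² - 1 = (s + 1)(s - 1)`), hence `(w - 1)^(c-1) d = 0` and the coordinates of `α_c` and `β_c`
agree. -/

lemma malcevPair_succ {M : Type*} [Monoid M] (m : ℕ) (x y : M) :
    malcevPair (m + 1) x y = ((malcevPair m x y).1 * (malcevPair m x y).2,
      (malcevPair m x y).2 * (malcevPair m x y).1) := rfl

lemma malcevPair_succ_eq_malcevPair_mul_mul {M : Type*} [Monoid M] (m : ℕ) (x y : M) :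
    malcevPair (m + 1) x y = malcevPair m (x * y) (y * x) := by
  induction m with
  | zero => rfl
  | succ m ih => rw [malcevPair_succ, ih, malcevPair_succ]

lemma sub_one_pow_mul_pow_sub_one {R : Type*} [Ring R] (d : R) (j k : ℕ) :
    (d - 1) ^ k * (d ^ j - 1) = (∑ i ∈ Finset.range j, d ^ i) * (d - 1) ^ (k + 1) := by
  have hcomm : Commute ((d - 1) ^ k) (∑ i ∈ Finset.range j, d ^ i) :=
    Commute.sum_right _ _ _ fun i _ =>
      (((Commute.refl d).sub_left (Commute.one_left d)).pow_left k).pow_right i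
  rw [← geom_sum_mul, ← mul_assoc, hcomm.eq, mul_assoc, ← pow_succ]

section Conj

variable {G : Type*} [Group G] (A : Subgroup G) [A.Normal] [IsMulCommutative A]

@[simp]
lemma coe_toMul_conjEnd (g : G) (u : Additive A) :
    ((conjEnd A g u).toMul : G) = g⁻¹ * u.toMul * g := rfl

@[simp]
lemma conjEnd_one : conjEnd A (1 : G) = 1 := by
  ext u
  simp

lemma conjEnd_mul (g h : G) : conjEnd A (g * h) = conjEnd A h * conjEnd A g := by
  ext u
  simp only [coe_toMul_conjEnd, mul_inv_rev, AddMonoid.End.coe_mul, Function.comp_apply]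
  group

lemma conjEnd_pow (g : G) (m : ℕ) : conjEnd A (g ^ m) = conjEnd A g ^ m := by
  induction m with
  | zero => simp
  | succ m ih => rw [pow_succ, conjEnd_mul, ih, pow_succ']

lemma Commute.conjEnd {g h : G} (hgh : Commute g h) :
    Commute (conjEnd A g) (conjEnd A h) := by
  rw [Commute, SemiconjBy, ← conjEnd_mul, ← conjEnd_mul, hgh.eq]

lemma mul_coe_mul_coe (g h : G) (u v : Additive A) :
    g * u.toMul * (h * v.toMul) = g * h * (conjEnd A h u + v).toMul := by
  simp only [toMul_add, Subgroup.coe_mul, coe_toMul_conjEnd]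
  group

lemma malcevPair_mul_coe (w : G) (u v : Additive A) (k m : ℕ)
    (huv : ((conjEnd A w - 1) ^ (k + m)) (u - v) = 0) :
    ∃ p q : Additive A, malcevPair m (w * u.toMul) (w * v.toMul)
        = (w ^ 2 ^ m * p.toMul, w ^ 2 ^ m * q.toMul) ∧
      ((conjEnd A w - 1) ^ k) (p - q) = 0 := by
  induction m generalizing k with
  | zero => exact ⟨u, v, by rw [pow_zero, pow_one]; rfl, huv⟩
  | succ m ih =>
    obtain ⟨p, q, hpq, hk⟩ := ih (k + 1) (by rwa [add_right_comm])
    refine ⟨(conjEnd A w ^ 2 ^ m) p + q, (conjEnd A w ^ 2 ^ m) q + p, ?_, ?_⟩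
    · simp only [malcevPair_succ, hpq, mul_coe_mul_coe, ← pow_add, ← two_mul, ← pow_succ',
        conjEnd_pow]
    · set W := conjEnd A w ^ 2 ^ m
      have hdiff : W p + q - (W q + p) = (W - 1) (p - q) := by
        rw [map_sub]
        change _ = (W p - p) - (W q - q)
        abel
      rw [hdiff]
      change ((conjEnd A w - 1) ^ k * (W - 1)) (p - q) = 0
      rw [sub_one_pow_mul_pow_sub_one, AddMonoid.End.coe_mul, Function.comp_apply, hk, map_zero]

lemma conjEnd_mul_sub_one_pow_mul_eq_zero {ι : Type*} (m : ℕ) (t : ι → G)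
    (hcomm : ∀ i j, Commute (t i) (t j))
    (h1 : ∀ i, (conjEnd A (t i) - 1) ^ (m + 1) = 0)
    (h2 : ∀ i j, i ≠ j →
      (conjEnd A (t i) - 1) * (conjEnd A (t i) * conjEnd A (t j) - 1) ^ m = 0)
    {s s' : G} (hs : s ∈ insert 1 (Set.range t)) (hs' : s' ∈ insert 1 (Set.range t)) :
    (conjEnd A (s * s') - 1) ^ m * (conjEnd A s - 1) = 0 := by
  rcases hs with rfl | ⟨i, rfl⟩
  · simp
  rcases hs' with rfl | ⟨j, rfl⟩
  · rw [mul_one, ← pow_succ, h1]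
  rw [conjEnd_mul]
  by_cases hij : i = j
  · subst hij
    have hfactor : Commute (conjEnd A (t i) + 1) (conjEnd A (t i) - 1) :=
      ((Commute.refl _).add_left (Commute.one_left _)).sub_right (Commute.one_right _)
    rw [mul_self_sub_one, hfactor.mul_pow, mul_assoc, ← pow_succ, h1, mul_zero]
  · have hT : Commute (conjEnd A (t i) - 1) (conjEnd A (t i) * conjEnd A (t j) - 1) :=
      (((Commute.refl _).mul_right ((hcomm i j).conjEnd A)).sub_left
        (Commute.one_left _)).sub_right (Commute.one_right _)
    rw [← ((hcomm i j).conjEnd A).eq, ← (hT.pow_right m).eq]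
    exact h2 i j hij

end Conj

lemma commute_of_mem_insert_one_range {M ι : Type*} [Monoid M] {t : ι → M}
    (hcomm : ∀ i j, Commute (t i) (t j)) {s s' : M} (hs : s ∈ insert 1 (Set.range t))
    (hs' : s' ∈ insert 1 (Set.range t)) : Commute s s' := by
  rcases hs with rfl | ⟨i, rfl⟩
  · exact Commute.one_left _
  rcases hs' with rfl | ⟨j, rfl⟩
  · exact Commute.one_right _
  exact hcomm i j

lemma exists_eq_mul_coe_of_mem_union_cosets {G ι : Type*} [Group G] (A : Subgroup G)
    (t : ι → G)
    {x : G} (hx : x ∈ (⋃ i, t i • (A : Set G)) ∪ (A : Set G)) :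
    ∃ s ∈ insert 1 (Set.range t), ∃ u : Additive A, x = s * u.toMul := by
  rcases hx with hx | hx
  · obtain ⟨i, a, ha, rfl⟩ := Set.mem_iUnion.mp hx
    exact ⟨t i, Or.inr ⟨i, rfl⟩, Additive.ofMul ⟨a, ha⟩, rfl⟩
  · exact ⟨1, Or.inl rfl, Additive.ofMul ⟨x, hx⟩, (one_mul x).symm⟩

theorem malcev_law_on_union_of_cosets
    {G : Type*} [Group G] (A : Subgroup G) [A.Normal] [IsMulCommutative A]
    (c n : ℕ) (hc : 1 ≤ c) (t : Fin n → G)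
    (hcomm : ∀ i j, Commute (t i) (t j))
    (h1 : ∀ i, (conjEnd A (t i) - 1) ^ c = 0)
    (h2 : ∀ i j, i ≠ j →
      (conjEnd A (t i) - 1) * (conjEnd A (t i) * conjEnd A (t j) - 1) ^ (c - 1) = 0) :
    ∀ x ∈ (⋃ i, t i • (A : Set G)) ∪ (A : Set G),
      ∀ y ∈ (⋃ i, t i • (A : Set G)) ∪ (A : Set G),
        malcevAlpha c x y = malcevBeta c x y := by
  intro x hx y hy
  obtain ⟨s, hs, u, rfl⟩ := exists_eq_mul_coe_of_mem_union_cosets A t hx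
  obtain ⟨s', hs', v, rfl⟩ := exists_eq_mul_coe_of_mem_union_cosets A t hy
  obtain ⟨m, rfl⟩ := Nat.exists_eq_add_of_le' hc
  rw [Nat.add_sub_cancel] at h2
  have hss' := commute_of_mem_insert_one_range hcomm hs hs'
  have hs_vanish := conjEnd_mul_sub_one_pow_mul_eq_zero A m t hcomm h1 h2 hs hs'
  have hs'_vanish := conjEnd_mul_sub_one_pow_mul_eq_zero A m t hcomm h1 h2 hs' hs
  rw [← hss'.eq] at hs'_vanish
  have hkill :
      ((conjEnd A (s * s') - 1) ^ (0 + m)) (conjEnd A s' u + v - (conjEnd A s v + u)) = 0 := by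
    have hdiff : conjEnd A s' u + v - (conjEnd A s v + u)
        = (conjEnd A s' - 1) u - (conjEnd A s - 1) v := by
      change _ = (conjEnd A s' u - u) - (conjEnd A s v - v)
      abel
    rw [zero_add, hdiff, map_sub, sub_eq_zero]
    exact (DFunLike.congr_fun hs'_vanish u).trans (DFunLike.congr_fun hs_vanish v).symm
  obtain ⟨p, q, hpq, hp_eq_q⟩ := malcevPair_mul_coe A (s * s') _ _ 0 m hkill
  rw [pow_zero, AddMonoid.End.one_apply, sub_eq_zero] at hp_eq_q
  rw [malcevAlpha, malcevBeta, malcevPair_succ_eq_malcevPair_mul_mul, mul_coe_mul_coe,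
    mul_coe_mul_coe, ← hss'.eq, hpq, hp_eq_q]
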